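/- arXiv:1711.01648 — 3 statements merged into one kernel-verified Lean document; each statement's English description precedes it below -/
import Mathlib

section
/- Let O ⊆ ℝ^d be open and F ⊆ ℝ^d be closed. Suppose f_n : ℝ≥0 → ℝ^d converges uniformly on every compact interval to a continuous function f : ℝ≥0 → ℝ^d. Define T^n_O = inf {t ≥ 0 : f_n(t) ∈ O}, T^n_F = inf {t ≥ 0 : f_n(t) ∈ F}, and T_O, T_F analogously for f. Then T_F ≤ liminf_{n→∞} T^n_F and limsup_{n→∞} T^n_O ≤ T_O. -/
open Filter MeasureTheory Set

/-- Hitting time of a set `S` by a path `f : ℝ≥0 → E`, valued in `[0,∞]`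
(with `inf ∅ = ∞`). -/
noncomputable def hitTime {E : Type*} (f : NNReal → E) (S : Set E) : ENNReal :=
  sInf ((fun t : NNReal => (t : ENNReal)) '' {t | f t ∈ S})

/-- If `fₙ` converges to a continuous `f` uniformly on every compact interval,
`O` is open and `F` is closed, then `T_F ≤ liminf Tⁿ_F` and `limsup Tⁿ_O ≤ T_O`. -/
theorem stmt0 {d : ℕ} (O F : Set (EuclideanSpace ℝ (Fin d)))
    (hO : IsOpen O) (hF : IsClosed F)
    (fn : ℕ → NNReal → EuclideanSpace ℝ (Fin d))
    (f : NNReal → EuclideanSpace ℝ (Fin d))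
    (hf : Continuous f)
    (hconv : ∀ T : NNReal, 0 < T →
      TendstoUniformlyOn (fun n t => fn n t) f atTop (Set.Iic T)) :
    hitTime f F ≤ atTop.liminf (fun n => hitTime (fn n) F) ∧
      atTop.limsup (fun n => hitTime (fn n) O) ≤ hitTime f O := by
  constructor
  · rw [le_liminf_iff]
    intro b hb
    obtain ⟨c', hbc', hc'⟩ := exists_between hb
    have hc'top : c' ≠ ⊤ := ne_top_of_lt hc'
    lift c' to NNReal using hc'top with c
    -- f t ∉ F for t ≤ c
    have hnotF : ∀ t : NNReal, t ≤ c → f t ∉ F := by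
      intro t ht hmem
      have h1 : hitTime f F ≤ (t : ENNReal) := sInf_le ⟨t, hmem, rfl⟩
      have h2 : (t : ENNReal) ≤ (c : ENNReal) := by exact_mod_cast ht
      exact absurd (h1.trans h2) (not_le.mpr hc')
    -- compact image and thickening
    have hKc : IsCompact (f '' Set.Iic c) := by
      have : IsCompact (Set.Iic c) := by
        rw [← Set.Icc_bot]; exact isCompact_Icc
      exact this.image hf
    have hKsub : f '' Set.Iic c ⊆ Fᶜ := by
      rintro x ⟨t, ht, rfl⟩
      exact hnotF t ht
    obtain ⟨ε, hε, hthick⟩ :=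
      hKc.exists_thickening_subset_open hF.isOpen_compl hKsub
    have hT : (0 : NNReal) < c + 1 := by positivity
    have hUC := (Metric.tendstoUniformlyOn_iff.mp (hconv (c + 1) hT)) ε hε
    filter_upwards [hUC] with n hn
    -- show c ≤ hitTime (fn n) F, hence b < it
    have hge : (c : ENNReal) ≤ hitTime (fn n) F := by
      apply le_sInf
      rintro x ⟨t, hmem, rfl⟩
      by_contra hlt
      push_neg at hlt
      have htc : t ≤ c := by exact_mod_cast hlt.le
      have hd : dist (f t) (fn n t) < ε := hn t (htc.trans (le_self_add))
      have : fn n t ∈ Metric.thickening ε (f '' Set.Iic c) := by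
        rw [Metric.mem_thickening_iff]
        exact ⟨f t, ⟨t, htc, rfl⟩, by rwa [dist_comm]⟩
      exact (hthick this) hmem
    exact lt_of_lt_of_le hbc' hge
  · rw [limsup_le_iff]
    intro a ha
    obtain ⟨x, ⟨t, hmem, rfl⟩, hta⟩ := sInf_lt_iff.mp ha
    obtain ⟨ε, hε, hball⟩ := Metric.isOpen_iff.mp hO (f t) hmem
    have hT : (0 : NNReal) < t + 1 := by positivity
    have hUC := (Metric.tendstoUniformlyOn_iff.mp (hconv (t + 1) hT)) ε hε
    filter_upwards [hUC] with n hn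
    have hd : dist (f t) (fn n t) < ε := hn t (Set.mem_Iic.mpr le_self_add)
    have : fn n t ∈ O := hball (by rwa [Metric.mem_ball, dist_comm])
    exact lt_of_le_of_lt (sInf_le ⟨t, this, rfl⟩) hta
end

section
/- Let O ⊆ ℝ^d be open with closure F. Suppose f_n : ℝ≥0 → ℝ^d converges uniformly on compacts to a continuous f, and suppose the hitting times of f satisfy T_O = T_F < ∞. Then both T^n_O and T^n_F converge to T_O = T_F as n → ∞. -/
/- Hitting the open set `O` is stable under pointwise perturbation of the path, so `T_O` is upper
semicontinuous; staying away from the closed set `F` up to a time `b < T_F` is stable under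
uniform perturbation on `[0, b]` (compactness of `f([0, b])`), so `T_F` is lower semicontinuous.
Since `T^n_F ≤ T^n_O`, the hypothesis `T_O = T_F` squeezes both sequences to the common value. -/

open Filter MeasureTheory Set

open Topology Uniformity

theorem TendstoUniformlyOn.eventually_mapsTo {ι α β : Type*} [TopologicalSpace α]
    [UniformSpace β] {F : ι → α → β} {f : α → β} {p : Filter ι} {K : Set α} {U : Set β}
    (h : TendstoUniformlyOn F f p K) (hK : IsCompact K) (hf : ContinuousOn f K) (hU : IsOpen U)
    (hKU : MapsTo f K U) : ∀ᶠ n in p, MapsTo (F n) K U := by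
  have hU_nhds : U ∈ 𝓝ˢ (f '' K) := hU.mem_nhdsSet.2 hKU.image_subset
  obtain ⟨V, hV, hVU⟩ :=
    ((hK.image_of_continuousOn hf).nhdsSet_basis_uniformity (𝓤 β).basis_sets).mem_iff.1 hU_nhds
  filter_upwards [h V hV] with n hn t ht
  exact hVU (mem_biUnion (mem_image_of_mem f ht) (hn t ht))

section HitTime

variable {E : Type*}

theorem hitTime_le_of_mem {f : NNReal → E} {S : Set E} {t : NNReal} (ht : f t ∈ S) :
    hitTime f S ≤ t :=
  sInf_le ⟨t, ht, rfl⟩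

theorem hitTime_anti (f : NNReal → E) {S S' : Set E} (h : S ⊆ S') :
    hitTime f S' ≤ hitTime f S :=
  sInf_le_sInf (image_mono fun _ ht => h ht)

theorem mapsTo_compl_of_lt_hitTime {f : NNReal → E} {S : Set E} {b : NNReal}
    (hb : (b : ENNReal) < hitTime f S) : MapsTo f (Iic b) Sᶜ := fun _ htb hmem =>
  (hitTime_le_of_mem hmem).not_gt (hb.trans_le' (ENNReal.coe_le_coe.2 htb))

theorem le_hitTime_of_mapsTo_compl {f : NNReal → E} {S : Set E} {b : NNReal}
    (h : MapsTo f (Iic b) Sᶜ) : (b : ENNReal) ≤ hitTime f S := by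
  refine le_sInf ?_
  rintro _ ⟨t, ht, rfl⟩
  by_contra! hlt
  exact h (ENNReal.coe_le_coe.1 hlt.le) ht

theorem eventually_hitTime_lt_of_isOpen [TopologicalSpace E] {ι : Type*} {l : Filter ι}
    {fn : ι → NNReal → E} {f : NNReal → E} {O : Set E} (hO : IsOpen O)
    (hconv : ∀ t, Tendsto (fun n => fn n t) l (𝓝 (f t))) {a : ENNReal}
    (ha : hitTime f O < a) : ∀ᶠ n in l, hitTime (fn n) O < a := by
  obtain ⟨_, ⟨t, ht, rfl⟩, hta⟩ := sInf_lt_iff.1 ha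
  filter_upwards [(hconv t).eventually (hO.mem_nhds ht)] with n hn
  exact (hitTime_le_of_mem hn).trans_lt hta

theorem eventually_lt_hitTime_of_isClosed [UniformSpace E] {ι : Type*} {l : Filter ι}
    {fn : ι → NNReal → E} {f : NNReal → E} {F : Set E} (hF : IsClosed F) (hf : Continuous f)
    (hconv : ∀ T : NNReal, 0 < T → TendstoUniformlyOn fn f l (Iic T)) {a : ENNReal}
    (ha : a < hitTime f F) : ∀ᶠ n in l, a < hitTime (fn n) F := by
  obtain ⟨c, hac, hc⟩ := exists_between ha
  have hc_top : c ≠ ⊤ := (hc.trans_le le_top).ne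
  set b := c.toNNReal
  have hbc : (b : ENNReal) = c := ENNReal.coe_toNNReal hc_top
  have hb_pos : 0 < b := ENNReal.toNNReal_pos (pos_of_gt hac).ne' hc_top
  have hK : IsCompact (Iic b) := Icc_bot (a := b) ▸ isCompact_Icc
  filter_upwards [(hconv b hb_pos).eventually_mapsTo hK hf.continuousOn hF.isOpen_compl
    (mapsTo_compl_of_lt_hitTime (hbc ▸ hc))] with n hn
  exact hac.trans_le (hbc ▸ le_hitTime_of_mapsTo_compl hn)

end HitTime

theorem stmt1_general {d : ℕ} (O : Set (EuclideanSpace ℝ (Fin d))) (hO : IsOpen O)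
    (fn : ℕ → NNReal → EuclideanSpace ℝ (Fin d))
    (f : NNReal → EuclideanSpace ℝ (Fin d))
    (hf : Continuous f)
    (hconv : ∀ T : NNReal, 0 < T →
      TendstoUniformlyOn (fun n t => fn n t) f atTop (Set.Iic T))
    (heq : hitTime f O = hitTime f (closure O)) :
    Tendsto (fun n => hitTime (fn n) O) atTop (nhds (hitTime f O)) ∧
      Tendsto (fun n => hitTime (fn n) (closure O)) atTop (nhds (hitTime f O)) := by
  have hmono (n : ℕ) : hitTime (fn n) (closure O) ≤ hitTime (fn n) O :=
    hitTime_anti (fn n) subset_closure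
  have hpointwise (t : NNReal) : Tendsto (fun n => fn n t) atTop (𝓝 (f t)) :=
    (hconv (t + 1) (zero_lt_one.trans_le le_add_self)).tendsto_at (mem_Iic.2 le_self_add)
  have hupper (a : ENNReal) (ha : hitTime f O < a) : ∀ᶠ n in atTop, hitTime (fn n) O < a :=
    eventually_hitTime_lt_of_isOpen hO hpointwise ha
  have hlower (a : ENNReal) (ha : a < hitTime f O) :
      ∀ᶠ n in atTop, a < hitTime (fn n) (closure O) :=
    eventually_lt_hitTime_of_isClosed isClosed_closure hf hconv (heq ▸ ha)
  refine ⟨tendsto_order.2 ⟨fun a ha => ?_, hupper⟩, tendsto_order.2 ⟨hlower, fun a ha => ?_⟩⟩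
  · filter_upwards [hlower a ha] with n hn using hn.trans_le (hmono n)
  · filter_upwards [hupper a ha] with n hn using (hmono n).trans_lt hn

/-- If `fₙ → f` uniformly on compacts, `f` is continuous, `O` is open and the
hitting times of `O` and of its closure by `f` agree and are finite, then both
`Tⁿ_O` and `Tⁿ_{closure O}` converge to `T_O = T_{closure O}`. -/
theorem stmt1 {d : ℕ} (O : Set (EuclideanSpace ℝ (Fin d))) (hO : IsOpen O)
    (fn : ℕ → NNReal → EuclideanSpace ℝ (Fin d))
    (f : NNReal → EuclideanSpace ℝ (Fin d))
    (hf : Continuous f)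
    (hconv : ∀ T : NNReal, 0 < T →
      TendstoUniformlyOn (fun n t => fn n t) f atTop (Set.Iic T))
    (heq : hitTime f O = hitTime f (closure O))
    (hfin : hitTime f O < ⊤) :
    Tendsto (fun n => hitTime (fn n) O) atTop (nhds (hitTime f O)) ∧
      Tendsto (fun n => hitTime (fn n) (closure O)) atTop (nhds (hitTime f O)) :=
  stmt1_general O hO fn f hf hconv heq
end

section
/- Let h⁺(x) for x ∈ [−r₊, r₊] be defined (in dimension 1) by h⁺(x) = u ∫_ℝ Φ(x,y) 1{y ≤ r₊}(Eι(y) − x) dy + u ∫_ℝ Φ(x,y) 1{y > r₊}(y − x) dy, where ι(y) = y and Eι(y) = y for |y| ≤ r₊. Assuming the two cancellation identities ∫_{−r₊}^{r₊}∫_{−r₊}^{r₊} Φ(x,y)(y−x) dy dx = 0 (by symmetry of Φ) and ∫_{−r₊}^{∞}∫_{−∞}^{−r₊} Φ(x,y)(Eι(y) − Eι(x)) dy dx = 0, one has (1/(2r₊)) ∫_{−r₊}^{r₊} h⁺(x) dx = (u/(2r₊)) ∫_{−∞}^{r₊} ∫_{r₊}^{∞} Φ(x,y)(y−x) dy dx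 = (u/(2r₊)) ∫₀^{2r₊} Φ(r₊, r₊+z) z² dz = σ₊²/(4r₊), where σ₊² = 2u r₊²/3. -/
/-!
The kernel `Φ` is explicit: it vanishes when `|x - y| ≥ 2r₊`, and for `x ≤ r₊ ≤ y ≤ x + 2r₊`
only the `r₊`-overlap survives, `Φ x y = (x + 2r₊ - y) / (2r₊)²`. Splitting the `y`-integral at
`±r₊` writes `h⁺(x)` on `[-r₊, r₊]` as `u` times the sum of the part over `y ≤ -r₊`, the part over
`|y| ≤ r₊`, and the part over `y > r₊`. The first averages to the second cancellation identity
(its integrand vanishes for `x > r₊`), the second to the first one, and the third is the cubic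
`(x + r₊)² (2r₊ - x) / (3 (2r₊)²)`, whose integral over `[-r₊, r₊]` is `r₊²/3`; so is
`∫₀^{2r₊} (2r₊ - z) z² dz / (2r₊)²`.
-/

open MeasureTheory Set

noncomputable def overlapKernel (rp rm x y : ℝ) : ℝ :=
  max (min (x + rp) (y + rp) - max (max (x - rp) 0) (max (y - rp) 0)) 0 / (2 * rp) ^ 2 +
    max (min (min (x + rm) 0) (min (y + rm) 0) - max (x - rm) (y - rm)) 0 / (2 * rm) ^ 2

lemma toReal_volume_ball_inter_Ioi (r x y : ℝ) :
    (volume ((Metric.ball x r ∩ Ioi 0) ∩ (Metric.ball y r ∩ Ioi 0))).toReal =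
      max (min (x + r) (y + r) - max (max (x - r) 0) (max (y - r) 0)) 0 := by
  rw [Real.ball_eq_Ioo, Real.ball_eq_Ioo, Ioo_inter_Ioi, Ioo_inter_Ioi, Ioo_inter_Ioo,
    Real.volume_Ioo, ENNReal.toReal_ofReal']

lemma toReal_volume_ball_inter_Iio (r x y : ℝ) :
    (volume ((Metric.ball x r ∩ Iio 0) ∩ (Metric.ball y r ∩ Iio 0))).toReal =
      max (min (min (x + r) 0) (min (y + r) 0) - max (x - r) (y - r)) 0 := by
  rw [Real.ball_eq_Ioo, Real.ball_eq_Ioo, Ioo_inter_Iio, Ioo_inter_Iio, Ioo_inter_Ioo,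
    Real.volume_Ioo, ENNReal.toReal_ofReal']

variable {rp rm x y : ℝ}

lemma continuous_overlapKernel : Continuous (Function.uncurry (overlapKernel rp rm)) := by
  unfold overlapKernel; fun_prop

lemma overlapKernel_eq_zero (hrr : rm ≤ rp) (hxy : 2 * rp ≤ |x - y|) :
    overlapKernel rp rm x y = 0 := by
  have hp : max (min (x + rp) (y + rp) - max (max (x - rp) 0) (max (y - rp) 0)) 0 = 0 := by
    rcases le_abs'.1 hxy with h | h <;> grind
  have hm : max (min (min (x + rm) 0) (min (y + rm) 0) - max (x - rm) (y - rm)) 0 = 0 := by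
    rcases le_abs'.1 hxy with h | h <;> grind
  rw [overlapKernel, hp, hm, zero_div, zero_div, add_zero]

lemma overlapKernel_of_le (hrr : rm ≤ rp) (hx : x ≤ rp) (hy : rp ≤ y) (hyx : y ≤ x + 2 * rp) :
    overlapKernel rp rm x y = (x + 2 * rp - y) / (2 * rp) ^ 2 := by
  have hp : max (min (x + rp) (y + rp) - max (max (x - rp) 0) (max (y - rp) 0)) 0 =
      x + 2 * rp - y := by
    grind
  have hm : max (min (min (x + rm) 0) (min (y + rm) 0) - max (x - rm) (y - rm)) 0 = 0 := by
    grind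
  rw [overlapKernel, hp, hm, zero_div, add_zero]

lemma setIntegral_Ioi_eq_intervalIntegral {f : ℝ → ℝ} {a b : ℝ} (hab : a ≤ b)
    (hf : ∀ x, b < x → f x = 0) : ∫ x in Ioi a, f x = ∫ x in a..b, f x := by
  rw [intervalIntegral.integral_of_le hab,
    setIntegral_eq_of_subset_of_forall_sdiff_eq_zero measurableSet_Ioi Ioc_subset_Ioi_self]
  exact fun x hx => hf x (lt_of_not_ge fun h => hx.2 ⟨hx.1, h⟩)

lemma integral_sub_mul_sub (a b c : ℝ) :
    ∫ y in a..b, (b - y) * (y - c) = (b - a) ^ 2 * (b + 2 * a - 3 * c) / 6 := by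
  have h : ∀ y : ℝ, (b - y) * (y - c) = (b + c) * y - y ^ 2 - b * c := fun y => by ring
  simp only [h]
  rw [intervalIntegral.integral_sub, intervalIntegral.integral_sub,
    intervalIntegral.integral_const_mul]
  · simp only [integral_id, integral_pow, intervalIntegral.integral_const, smul_eq_mul]
    ring
  all_goals exact Continuous.intervalIntegrable (by fun_prop) _ _

lemma integral_sub_mul_sq (a : ℝ) : ∫ z in (0:ℝ)..a, (a - z) * z ^ 2 = a ^ 4 / 12 := by
  have h : ∀ z : ℝ, (a - z) * z ^ 2 = a * z ^ 2 - z ^ 3 := fun z => by ring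
  simp only [h]
  rw [intervalIntegral.integral_sub, intervalIntegral.integral_const_mul]
  · simp only [integral_pow]
    ring
  all_goals exact Continuous.intervalIntegrable (by fun_prop) _ _

lemma setIntegral_Ioi_overlapKernel_mul_sub (hrr : rm ≤ rp) (hx : x ∈ Icc (-rp) rp) :
    ∫ y in Ioi rp, overlapKernel rp rm x y * (y - x) =
      (x + rp) ^ 2 * (2 * rp - x) / (3 * (2 * rp) ^ 2) := by
  obtain ⟨hx₁, hx₂⟩ := hx
  have hK : EqOn (fun y => overlapKernel rp rm x y * (y - x))
      (fun y => (x + 2 * rp - y) * (y - x) / (2 * rp) ^ 2) (uIcc rp (x + 2 * rp)) := by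
    intro y hy
    rw [uIcc_of_le (by linarith)] at hy
    simp only [overlapKernel_of_le hrr hx₂ hy.1 hy.2]
    ring
  rw [setIntegral_Ioi_eq_intervalIntegral (b := x + 2 * rp) (by linarith) fun y hy => by
      rw [overlapKernel_eq_zero hrr (by rw [abs_sub_comm]; exact le_abs.2 (.inl (by linarith))),
        zero_mul],
    intervalIntegral.integral_congr hK, intervalIntegral.integral_div, integral_sub_mul_sub]
  ring

lemma integrableOn_setIntegral_Ioi_overlapKernel_mul_sub (hrr : rm ≤ rp) :
    IntegrableOn (fun x => ∫ y in Ioi rp, overlapKernel rp rm x y * (y - x)) (Icc (-rp) rp) :=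
  (Continuous.integrableOn_Icc (by fun_prop)).congr_fun
    (fun _ hx => (setIntegral_Ioi_overlapKernel_mul_sub hrr hx).symm) measurableSet_Icc

lemma setIntegral_Icc_setIntegral_Ioi_overlapKernel_mul_sub (hrr : rm ≤ rp) (hrp : 0 < rp) :
    ∫ x in Icc (-rp) rp, ∫ y in Ioi rp, overlapKernel rp rm x y * (y - x) = rp ^ 2 / 3 := by
  have h : ∀ x : ℝ, (x + rp) ^ 2 * (2 * rp - x) = 2 * rp ^ 3 + 3 * rp ^ 2 * x - x ^ 3 :=
    fun x => by ring
  rw [setIntegral_congr_fun measurableSet_Icc fun _ hx =>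
      setIntegral_Ioi_overlapKernel_mul_sub hrr hx,
    integral_Icc_eq_integral_Ioc, ← intervalIntegral.integral_of_le (by linarith),
    intervalIntegral.integral_div]
  simp only [h]
  rw [intervalIntegral.integral_sub, intervalIntegral.integral_add,
    intervalIntegral.integral_const_mul (3 * rp ^ 2)]
  · simp only [integral_id, integral_pow, intervalIntegral.integral_const]
    field_simp
    ring
  all_goals exact Continuous.intervalIntegrable (by fun_prop) _ _

lemma setIntegral_Icc_eq_setIntegral_Ici_of_overlapKernel (hrr : rm ≤ rp) (E : ℝ → ℝ) :
    ∫ x in Icc (-rp) rp, ∫ y in Iic (-rp), overlapKernel rp rm x y * (E y - E x) =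
      ∫ x in Ici (-rp), ∫ y in Iic (-rp), overlapKernel rp rm x y * (E y - E x) := by
  refine (setIntegral_eq_of_subset_of_forall_sdiff_eq_zero measurableSet_Ici Icc_subset_Ici_self
    fun x hx => setIntegral_eq_zero_of_forall_eq_zero fun y hy => ?_).symm
  have hx : rp < x := lt_of_not_ge fun h => hx.2 ⟨hx.1, h⟩
  rw [overlapKernel_eq_zero hrr (le_abs.2 (.inl (by linarith [mem_Iic.1 hy]))), zero_mul]

lemma setIntegral_Iic_eq_add {f E : ℝ → ℝ} {r x : ℝ} (hE : ∀ y, |y| ≤ r → E y = y)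
    (hx : x ∈ Icc (-r) r) (hf : IntegrableOn (fun y => f y * (E y - x)) (Iic r)) :
    ∫ y in Iic r, f y * (E y - x) =
      (∫ y in Iic (-r), f y * (E y - E x)) + ∫ y in Icc (-r) r, f y * (y - x) := by
  have hmid : ∫ y in Ioc (-r) r, f y * (E y - x) = ∫ y in Icc (-r) r, f y * (y - x) := by
    rw [integral_Icc_eq_integral_Ioc]
    exact setIntegral_congr_fun measurableSet_Ioc fun y hy => by
      rw [hE y (abs_le.2 ⟨hy.1.le, hy.2⟩)]
  rw [← Iic_union_Ioc_eq_Iic (hx.1.trans hx.2),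
    setIntegral_union (Iic_disjoint_Ioc le_rfl) measurableSet_Ioc
      (hf.mono_set (Iic_subset_Iic.2 (hx.1.trans hx.2))) (hf.mono_set Ioc_subset_Iic_self),
    hmid, hE x (abs_le.2 hx)]

lemma integral_overlapKernel_mul_sq (hrr : rm ≤ rp) (hrp : 0 < rp) :
    ∫ z in (0:ℝ)..(2 * rp), overlapKernel rp rm rp (rp + z) * z ^ 2 = rp ^ 2 / 3 := by
  have hK : EqOn (fun z => overlapKernel rp rm rp (rp + z) * z ^ 2)
      (fun z => (2 * rp - z) * z ^ 2 / (2 * rp) ^ 2) (uIcc 0 (2 * rp)) := by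
    intro z hz
    rw [uIcc_of_le (by linarith)] at hz
    dsimp only
    rw [overlapKernel_of_le hrr le_rfl (by linarith [hz.1]) (by linarith [hz.2])]
    ring
  rw [intervalIntegral.integral_congr hK, intervalIntegral.integral_div, integral_sub_mul_sq]
  field_simp
  ring

theorem stmt18_general (rm rp u : ℝ) (hrm : 0 < rm) (hrr : rm ≤ rp)
    (Φ : ℝ → ℝ → ℝ)
    (hΦ : ∀ x y, Φ x y =
      (volume ((Metric.ball x rp ∩ Ioi (0:ℝ)) ∩ (Metric.ball y rp ∩ Ioi (0:ℝ)))).toReal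
        / (2 * rp) ^ 2 +
      (volume ((Metric.ball x rm ∩ Iio (0:ℝ)) ∩ (Metric.ball y rm ∩ Iio (0:ℝ)))).toReal
        / (2 * rm) ^ 2)
    (Eiota : ℝ → ℝ)
    (hEid : ∀ y : ℝ, |y| ≤ rp → Eiota y = y)
    (hplus : ℝ → ℝ)
    (hhplus : ∀ x : ℝ, hplus x =
      u * (∫ y in Iic rp, Φ x y * (Eiota y - x)) +
      u * (∫ y in Ioi rp, Φ x y * (y - x)))
    (hint1 : ∀ x ∈ Icc (-rp) rp, IntegrableOn (fun y => Φ x y * (Eiota y - x)) (Iic rp))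
    (hintH : IntegrableOn hplus (Icc (-rp) rp))
    (hcancel1 : ∫ x in Icc (-rp) rp, ∫ y in Icc (-rp) rp, Φ x y * (y - x) = 0)
    (hcancel2 : ∫ x in Ici (-rp), ∫ y in Iic (-rp), Φ x y * (Eiota y - Eiota x) = 0) :
    (1 / (2 * rp)) * ∫ x in Icc (-rp) rp, hplus x =
        (u / (2 * rp)) * ∫ z in (0:ℝ)..(2 * rp), Φ rp (rp + z) * z ^ 2 ∧
      (u / (2 * rp)) * ∫ z in (0:ℝ)..(2 * rp), Φ rp (rp + z) * z ^ 2 =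
        (2 * u * rp ^ 2 / 3) / (4 * rp) := by
  have hrp : 0 < rp := hrm.trans_le hrr
  obtain rfl : Φ = overlapKernel rp rm := funext₂ fun x y => by
    rw [hΦ, toReal_volume_ball_inter_Ioi, toReal_volume_ball_inter_Iio, overlapKernel]
  set K := overlapKernel rp rm
  set A := fun x => (∫ y in Icc (-rp) rp, K x y * (y - x)) + ∫ y in Ioi rp, K x y * (y - x)
  have hinner_int :
      IntegrableOn (fun x => ∫ y in Icc (-rp) rp, K x y * (y - x)) (Icc (-rp) rp) :=
    (continuous_parametric_integral_of_continuous
      (continuous_overlapKernel.mul (continuous_snd.sub continuous_fst))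
      isCompact_Icc).integrableOn_Icc
  have hright_int := integrableOn_setIntegral_Ioi_overlapKernel_mul_sub (rm := rm) hrr
  have hA_int : IntegrableOn A (Icc (-rp) rp) := hinner_int.add hright_int
  have hA : ∫ x in Icc (-rp) rp, A x = rp ^ 2 / 3 := by
    rw [integral_add hinner_int hright_int, hcancel1,
      setIntegral_Icc_setIntegral_Ioi_overlapKernel_mul_sub hrr hrp, zero_add]
  have hdecomp : EqOn (fun x => hplus x - u * A x)
      (fun x => u * ∫ y in Iic (-rp), K x y * (Eiota y - Eiota x)) (Icc (-rp) rp) :=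
    fun x hx => by
      simp only [A, hhplus, setIntegral_Iic_eq_add hEid hx (hint1 x hx)]
      ring
  have htot : ∫ x in Icc (-rp) rp, hplus x = u * (rp ^ 2 / 3) := by
    have h := integral_sub hintH (hA_int.const_mul u)
    rw [setIntegral_congr_fun measurableSet_Icc hdecomp, integral_const_mul, integral_const_mul,
      setIntegral_Icc_eq_setIntegral_Ici_of_overlapKernel hrr, hcancel2, hA] at h
    linarith
  have hJ := integral_overlapKernel_mul_sq hrr hrp
  exact ⟨by rw [htot, hJ]; ring, by rw [hJ]; field_simp; ring⟩

/-- Average of `h⁺` against the uniform measure on `[−r₊,r₊]` in dimension one: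
assuming the two cancellation identities, one has
`(1/(2r₊)) ∫_{−r₊}^{r₊} h⁺(x) dx = (u/(2r₊)) ∫₀^{2r₊} Φ(r₊,r₊+z) z² dz = σ₊²/(4r₊)`
with `σ₊² = 2u r₊²/3`. -/
theorem stmt18 (rm rp u : ℝ) (hrm : 0 < rm) (hrr : rm ≤ rp)
    (hu : 0 < u) (hu1 : u ≤ 1)
    (Φ : ℝ → ℝ → ℝ)
    (hΦ : ∀ x y, Φ x y =
      (volume ((Metric.ball x rp ∩ Ioi (0:ℝ)) ∩ (Metric.ball y rp ∩ Ioi (0:ℝ)))).toReal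
        / (2 * rp) ^ 2 +
      (volume ((Metric.ball x rm ∩ Iio (0:ℝ)) ∩ (Metric.ball y rm ∩ Iio (0:ℝ)))).toReal
        / (2 * rm) ^ 2)
    (Eiota : ℝ → ℝ) (hEmeas : Measurable Eiota)
    (hEid : ∀ y : ℝ, |y| ≤ rp → Eiota y = y)
    (hEb : ∀ y : ℝ, |Eiota y| ≤ rp)
    (hplus : ℝ → ℝ)
    (hhplus : ∀ x : ℝ, hplus x =
      u * (∫ y in Iic rp, Φ x y * (Eiota y - x)) +
      u * (∫ y in Ioi rp, Φ x y * (y - x)))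
    (hint1 : ∀ x ∈ Icc (-rp) rp, IntegrableOn (fun y => Φ x y * (Eiota y - x)) (Iic rp))
    (hint2 : ∀ x ∈ Icc (-rp) rp, IntegrableOn (fun y => Φ x y * (y - x)) (Ioi rp))
    (hintH : IntegrableOn hplus (Icc (-rp) rp))
    (hcancel1 : ∫ x in Icc (-rp) rp, ∫ y in Icc (-rp) rp, Φ x y * (y - x) = 0)
    (hcancel2 : ∫ x in Ici (-rp), ∫ y in Iic (-rp), Φ x y * (Eiota y - Eiota x) = 0) :
    (1 / (2 * rp)) * ∫ x in Icc (-rp) rp, hplus x =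
        (u / (2 * rp)) * ∫ z in (0:ℝ)..(2 * rp), Φ rp (rp + z) * z ^ 2 ∧
      (u / (2 * rp)) * ∫ z in (0:ℝ)..(2 * rp), Φ rp (rp + z) * z ^ 2 =
        (2 * u * rp ^ 2 / 3) / (4 * rp) :=
  stmt18_general rm rp u hrm hrr Φ hΦ Eiota hEid hplus hhplus hint1 hintH hcancel1 hcancel2
end
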